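/- arXiv:1309.4708 — 6 statements merged into one kernel-verified Lean document; each statement's English description precedes it below -/
import Mathlib

section
/- Let v, w : ℝ → ℝ with v convex, v ≤ w, v(0) = w(0), and w differentiable at 0. Then v is differentiable at 0 with v'(0) = w'(0), and moreover v(t) ≥ w(0) + w'(0)·t for all t ∈ ℝ. -/
open Filter Asymptotics Topology

theorem stmt1 (v w : ℝ → ℝ) (hv : ConvexOn ℝ Set.univ v)
    (hle : ∀ t, v t ≤ w t) (h0 : v 0 = w 0)
    (w' : ℝ) (hw : HasDerivAt w w' 0) :
    HasDerivAt v w' 0 ∧ ∀ t : ℝ, v t ≥ w 0 + w' * t := by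
  have hslope : Tendsto (slope w 0) (𝓝[≠] 0) (𝓝 w') :=
    hasDerivAt_iff_tendsto_slope.1 hw
  have hmono := hv.slope_mono (Set.mem_univ (0 : ℝ))
  -- slope comparison
  have hcmp_pos : ∀ t : ℝ, 0 < t → slope v 0 t ≤ slope w 0 t := by
    intro t ht
    simp only [slope_def_field, sub_zero]
    exact div_le_div_of_nonneg_right (sub_le_sub (hle t) h0.ge) ht.le
  have hcmp_neg : ∀ s : ℝ, s < 0 → slope w 0 s ≤ slope v 0 s := by
    intro s hs
    simp only [slope_def_field, sub_zero]
    rw [div_le_div_right_of_neg hs]; exact sub_le_sub (hle s) h0.ge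
  -- v's slope at positive t is ≥ w'
  have hpos : ∀ t : ℝ, 0 < t → w' ≤ slope v 0 t := by
    intro t ht
    have hb : ∀ᶠ s in 𝓝[<] (0:ℝ), slope w 0 s ≤ slope v 0 t := by
      filter_upwards [self_mem_nhdsWithin] with s hs
      have hs' : s < 0 := hs
      calc slope w 0 s ≤ slope v 0 s := hcmp_neg s hs'
        _ ≤ slope v 0 t := hmono ⟨Set.mem_univ _, hs'.ne⟩ ⟨Set.mem_univ _, ht.ne'⟩ (hs'.le.trans ht.le)
    have hten : Tendsto (slope w 0) (𝓝[<] (0:ℝ)) (𝓝 w') :=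
      hslope.mono_left (nhdsWithin_mono _ (fun x hx => ne_of_lt hx))
    exact le_of_tendsto hten hb
  -- v's slope at negative t is ≤ w'
  have hneg : ∀ t : ℝ, t < 0 → slope v 0 t ≤ w' := by
    intro t ht
    have hb : ∀ᶠ s in 𝓝[>] (0:ℝ), slope v 0 t ≤ slope w 0 s := by
      filter_upwards [self_mem_nhdsWithin] with s hs
      have hs' : (0:ℝ) < s := hs
      calc slope v 0 t ≤ slope v 0 s := hmono ⟨Set.mem_univ _, ht.ne⟩ ⟨Set.mem_univ _, hs'.ne'⟩ (ht.le.trans hs'.le)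
        _ ≤ slope w 0 s := hcmp_pos s hs'
    have hten : Tendsto (slope w 0) (𝓝[>] (0:ℝ)) (𝓝 w') :=
      hslope.mono_left (nhdsWithin_mono _ (fun x hx => ne_of_gt hx))
    exact ge_of_tendsto hten hb
  -- subgradient inequality
  have key : ∀ t : ℝ, w 0 + w' * t ≤ v t := by
    intro t
    rcases lt_trichotomy t 0 with ht | rfl | ht
    · have := hneg t ht
      rw [slope_def_field, sub_zero, div_le_iff_of_neg ht] at this
      linarith [this]
    · simpa using h0.ge
    · have := hpos t ht
      rw [slope_def_field, sub_zero, le_div_iff₀ ht] at this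
      linarith [this]
  refine ⟨?_, fun t => key t⟩
  -- squeeze for differentiability
  rw [hasDerivAt_iff_isLittleO]
  have hwlo : (fun t : ℝ => w t - w 0 - (t - 0) • w') =o[nhds 0] fun t => t - 0 :=
    hasDerivAt_iff_isLittleO.1 hw
  have hO : (fun t : ℝ => v t - v 0 - (t - 0) • w') =O[nhds 0]
      fun t : ℝ => w t - w 0 - (t - 0) • w' := by
    apply isBigO_of_le
    intro t
    have h1 : w 0 + w' * t ≤ v t := key t
    have h2 : v t ≤ w t := hle t
    simp only [smul_eq_mul, sub_zero, Real.norm_eq_abs, h0]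
    rw [abs_le_iff_mul_self_le] <;> try skip
    · nlinarith [abs_nonneg (w t - w 0 - t * w'), sq_abs (w t - w 0 - t * w'),
        sq_abs (v t - w 0 - t * w'), abs_nonneg (v t - w 0 - t * w')]
  exact hO.trans_isLittleO hwlo
end

section
/- Let W : M → ℝ where M is the space of m×d real matrices, and define the Weierstrass excess W°(F,H) = W(F+H) − W(F) − ⟨W_F(F), H⟩, where W_F(F) denotes the Fréchet derivative of W at F (identified with a matrix via the Frobenius inner product ⟨·,·⟩). Suppose F₊, F₋ ∈ M satisfy F₊ − F₋ = a ⊗ n for some a ∈ ℝ^m, n ∈ ℝ^d, and suppose W°(F₊, u⊗v) ≥ 0 and W°(F₋, u⊗v) ≥ 0 for all rank-one matrices u⊗v. Let P± = W_F(F±), p* = (W(F₊) − W(F₋)) − ⟨(P₊+P₋)/2, F₊−F₋⟩, and 𝔑 = ⟨P₊ − P₋, F₊ − F₋⟩. Then 𝔑 ≥ 2|p*|; in particular 𝔑 ≥ 0. -/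
open Matrix

/-- Frobenius inner product of two `m × d` real matrices. -/
noncomputable def frob {m d : ℕ} (A B : Matrix (Fin m) (Fin d) ℝ) : ℝ :=
  ∑ i, ∑ j, A i j * B i j

/-- Weierstrass excess function `W°(F,H) = W(F+H) - W(F) - ⟨P(F), H⟩`,
where `P` is the (matrix representation of the) derivative of `W`. -/
noncomputable def Wex {m d : ℕ} (W : Matrix (Fin m) (Fin d) ℝ → ℝ)
    (P : Matrix (Fin m) (Fin d) ℝ → Matrix (Fin m) (Fin d) ℝ)
    (F H : Matrix (Fin m) (Fin d) ℝ) : ℝ :=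
  W (F + H) - W F - frob (P F) H

lemma frob_sub_left {m d : ℕ} (A B C : Matrix (Fin m) (Fin d) ℝ) :
    frob (A - B) C = frob A C - frob B C := by
  simp [frob, sub_mul, Finset.sum_sub_distrib]

lemma frob_smul_add_left {m d : ℕ} (c : ℝ) (A B C : Matrix (Fin m) (Fin d) ℝ) :
    frob (c • (A + B)) C = c * (frob A C + frob B C) := by
  simp [frob, add_mul, mul_add, Finset.mul_sum, Finset.sum_add_distrib, mul_assoc]

theorem stmt3 {m d : ℕ} (W : Matrix (Fin m) (Fin d) ℝ → ℝ)
    (P : Matrix (Fin m) (Fin d) ℝ → Matrix (Fin m) (Fin d) ℝ)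
    -- `P F` represents the derivative of `W` at `F` (via the Frobenius pairing)
    (hP : ∀ F H, HasDerivAt (fun t : ℝ => W (F + t • H)) (frob (P F) H) 0)
    (Fp Fm : Matrix (Fin m) (Fin d) ℝ) (a : Fin m → ℝ) (n : Fin d → ℝ)
    (hcomp : Fp - Fm = vecMulVec a n)
    (hWp : ∀ (u : Fin m → ℝ) (v : Fin d → ℝ), 0 ≤ Wex W P Fp (vecMulVec u v))
    (hWm : ∀ (u : Fin m → ℝ) (v : Fin d → ℝ), 0 ≤ Wex W P Fm (vecMulVec u v)) :
    frob (P Fp - P Fm) (Fp - Fm) ≥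
      2 * |(W Fp - W Fm) - frob ((1/2 : ℝ) • (P Fp + P Fm)) (Fp - Fm)| ∧
    frob (P Fp - P Fm) (Fp - Fm) ≥ 0 := by
  have hneg : vecMulVec (-a) n = Fm - Fp := by
    rw [show vecMulVec (-a) n = -(vecMulVec a n) by ext i j; simp [vecMulVec]]
    rw [← hcomp, neg_sub]
  have h1 := hWm a n
  have h2 := hWp (-a) n
  rw [Wex, ← hcomp, add_sub_cancel] at h1
  rw [Wex, hneg, add_sub_cancel] at h2
  have hfneg : frob (P Fp) (Fm - Fp) = - frob (P Fp) (Fp - Fm) := by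
    simp [frob, Matrix.sub_apply]
    rw [← Finset.sum_neg_distrib]
    apply Finset.sum_congr rfl
    intro i _
    rw [← Finset.sum_neg_distrib]
    apply Finset.sum_congr rfl
    intro j _
    ring
  rw [hfneg] at h2
  rw [frob_sub_left, frob_smul_add_left]
  set A := frob (P Fp) (Fp - Fm)
  set B := frob (P Fm) (Fp - Fm)
  constructor
  · have h : |W Fp - W Fm - 1 / 2 * (A + B)| ≤ (A - B) / 2 :=
      abs_le.mpr ⟨by linarith, by linarith⟩
    linarith
  · nlinarith
end

section
/- Let W : ℝ^{m×d} → ℝ be C² near F₊ and F₋ with F₊ − F₋ = a⊗n rank one. Suppose W°(F₊, −(a+ξ)⊗(n+η)) ≥ 0 and W°(F₋, (a+ξ)⊗(n+η)) ≥ 0 for all ξ ∈ ℝ^m, η ∈ ℝ^d, and that 𝔑 = ⟨P₊−P₋, F₊−F₋⟩ ≤ 0. Then p* = 0, (P₊−P₋)·n = 0 (traction continuity), and (P₊−P₋)ᵀ·a = 0 (roughening condition), where P± = W_F(F±). -/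
open Matrix

lemma frob_add_right {m d : ℕ} (A B C : Matrix (Fin m) (Fin d) ℝ) :
    frob A (B + C) = frob A B + frob A C := by
  simp [frob, mul_add, Finset.sum_add_distrib]

lemma frob_smul_right {m d : ℕ} (A : Matrix (Fin m) (Fin d) ℝ) (t : ℝ)
    (C : Matrix (Fin m) (Fin d) ℝ) : frob A (t • C) = t * frob A C := by
  simp [frob, Finset.mul_sum, mul_comm, mul_left_comm]

lemma frob_neg_right {m d : ℕ} (A C : Matrix (Fin m) (Fin d) ℝ) :
    frob A (-C) = -frob A C := by
  simp [frob]

lemma frob_add_left {m d : ℕ} (A B C : Matrix (Fin m) (Fin d) ℝ) :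
    frob (A + B) C = frob A C + frob B C := by
  simp [frob, add_mul, Finset.sum_add_distrib]

lemma frob_smul_left {m d : ℕ} (t : ℝ) (A C : Matrix (Fin m) (Fin d) ℝ) :
    frob (t • A) C = t * frob A C := by
  simp [frob, Finset.mul_sum, mul_assoc]

theorem stmt5 {m d : ℕ} (W : Matrix (Fin m) (Fin d) ℝ → ℝ)
    (P : Matrix (Fin m) (Fin d) ℝ → Matrix (Fin m) (Fin d) ℝ)
    (hP : ∀ F H, HasDerivAt (fun t : ℝ => W (F + t • H)) (frob (P F) H) 0)
    (Fp Fm : Matrix (Fin m) (Fin d) ℝ) (a : Fin m → ℝ) (n : Fin d → ℝ)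
    (hC2p : ∀ H, ContDiffAt ℝ 2 (fun t : ℝ => W (Fp + t • H)) 0)
    (hC2m : ∀ H, ContDiffAt ℝ 2 (fun t : ℝ => W (Fm + t • H)) 0)
    (hcomp : Fp - Fm = vecMulVec a n)
    (hWp : ∀ (ξ : Fin m → ℝ) (η : Fin d → ℝ),
      0 ≤ Wex W P Fp (-vecMulVec (a + ξ) (n + η)))
    (hWm : ∀ (ξ : Fin m → ℝ) (η : Fin d → ℝ),
      0 ≤ Wex W P Fm (vecMulVec (a + ξ) (n + η)))
    (hN : frob (P Fp - P Fm) (Fp - Fm) ≤ 0) :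
    (W Fp - W Fm) - frob ((1/2 : ℝ) • (P Fp + P Fm)) (Fp - Fm) = 0 ∧
    (P Fp - P Fm).mulVec n = 0 ∧
    (P Fp - P Fm)ᵀ.mulVec a = 0 := by
  set G : Matrix (Fin m) (Fin d) ℝ := vecMulVec a n with hG
  have hFp : Fm + G = Fp := by
    rw [← hcomp]; abel
  have hFm : Fp + -G = Fm := by
    rw [← hcomp]; abel
  -- evaluate the excess inequalities at ξ = 0, η = 0
  have hWm0 : 0 ≤ W Fp - W Fm - frob (P Fm) G := by
    have h := hWm 0 0
    simpa [Wex, hFp, ← hG] using h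
  have hWp0 : 0 ≤ W Fm - W Fp + frob (P Fp) G := by
    have h := hWp 0 0
    simpa [Wex, hFm, ← hG, frob_neg_right] using h
  have hN' : frob (P Fp) G - frob (P Fm) G ≤ 0 := by
    rw [← frob_sub_left, ← hcomp]; exact hN
  have hA : W Fp - W Fm - frob (P Fm) G = 0 := by linarith
  have hNz : frob (P Fp) G - frob (P Fm) G = 0 := by linarith
  -- key derivative lemma
  have key : ∀ H : Matrix (Fin m) (Fin d) ℝ,
      (∀ t : ℝ, 0 ≤ Wex W P Fm (G + t • H)) → frob (P Fp - P Fm) H = 0 := by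
    intro H hpos
    have heq : (fun t : ℝ => Wex W P Fm (G + t • H)) =
        fun t : ℝ => W (Fp + t • H) - (W Fm + frob (P Fm) G + t * frob (P Fm) H) := by
      funext t
      have harg : Fm + (G + t • H) = Fp + t • H := by rw [← add_assoc, hFp]
      simp [Wex, harg, frob_add_right, frob_smul_right]
      ring
    have hlin : HasDerivAt
        (fun t : ℝ => W Fm + frob (P Fm) G + t * frob (P Fm) H) (frob (P Fm) H) 0 :=
      (hasDerivAt_mul_const (frob (P Fm) H)).const_add _
    have hgd : HasDerivAt (fun t : ℝ => Wex W P Fm (G + t • H))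
        (frob (P Fp) H - frob (P Fm) H) 0 := by
      rw [heq]; exact (hP Fp H).sub hlin
    have hg0 : Wex W P Fm G = 0 := by
      simp [Wex, hFp, hA]
    have hmin : IsLocalMin (fun t : ℝ => Wex W P Fm (G + t • H)) 0 :=
      Filter.Eventually.of_forall (fun t => by simpa [hg0] using hpos t)
    have := hmin.hasDerivAt_eq_zero hgd
    rw [frob_sub_left]; exact this
  -- traction continuity
  have keyξ : ∀ ξ : Fin m → ℝ, frob (P Fp - P Fm) (vecMulVec ξ n) = 0 := by
    intro ξ
    apply key
    intro t
    have harg : G + t • vecMulVec ξ n = vecMulVec (a + t • ξ) (n + 0) := by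
      ext i j
      simp [hG, vecMulVec_apply]
      ring
    rw [harg]; exact hWm _ _
  have keyη : ∀ η : Fin d → ℝ, frob (P Fp - P Fm) (vecMulVec a η) = 0 := by
    intro η
    apply key
    intro t
    have harg : G + t • vecMulVec a η = vecMulVec (a + 0) (n + t • η) := by
      ext i j
      simp [hG, vecMulVec_apply]
      ring
    rw [harg]; exact hWm _ _
  refine ⟨?_, ?_, ?_⟩
  · rw [hcomp, frob_smul_left, frob_add_left]
    linarith
  · funext i
    have h := keyξ (Pi.single i 1)
    have : frob (P Fp - P Fm) (vecMulVec (Pi.single i 1) n) =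
        (P Fp - P Fm).mulVec n i := by
      simp [frob, vecMulVec_apply, mulVec, dotProduct, Pi.single_apply,
        ite_mul, mul_ite, Finset.sum_ite_eq, Finset.sum_ite_eq']
    rw [this] at h
    simpa using h
  · funext i
    have h := keyη (Pi.single i 1)
    have : frob (P Fp - P Fm) (vecMulVec a (Pi.single i 1)) =
        (P Fp - P Fm)ᵀ.mulVec a i := by
      simp [frob, vecMulVec_apply, mulVec, dotProduct, Pi.single_apply,
        ite_mul, mul_ite, Finset.sum_ite_eq, Finset.sum_ite_eq', transpose_apply,
        mul_comm]
    rw [this] at h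
    simpa using h
end

section
/- Let μ₊, μ₋ > 0 with μ₊ > μ₋, and w₊ < w₋ real numbers (so that jump w = w₊ − w₋ < 0 and jump μ = μ₊ − μ₋ > 0). Define W : ℝ² → ℝ by W(F) = min(μ₊|F|²/2 + w₊, μ₋|F|²/2 + w₋), and ε₊ = √(−2(w₊−w₋)μ₋/((μ₊−μ₋)μ₊)), ε₋ = √(−2(w₊−w₋)μ₊/((μ₊−μ₋)μ₋)). Then the function G(F) defined as μ₊|F|²/2 + w₊ for |F| ≤ ε₊, as |F|·√(−2(w₊−w₋)μ₊μ₋/(μ₊−μ₋)) + (μ₊w₊−μ₋w₋)/(μ₊−μ₋) for ε₊ ≤ |F| ≤ ε₋, and as μ₋|F|²/2 + w₋ for |F| ≥ ε₋, is convex, satisfies G ≤ W, and G = W on {|F| ≤ ε₊} ∪ {|F| ≥ ε₋}. -/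
/-- Anti-plane shear double-well energy density on `ℝ²`. -/
noncomputable def Wap (μp μm wp wm : ℝ) (F : EuclideanSpace ℝ (Fin 2)) : ℝ :=
  min (μp / 2 * ‖F‖ ^ 2 + wp) (μm / 2 * ‖F‖ ^ 2 + wm)

/-- Inner radius of the binodal annulus. -/
noncomputable def εp (μp μm wp wm : ℝ) : ℝ :=
  Real.sqrt (-2 * (wp - wm) * μm / ((μp - μm) * μp))

/-- Outer radius of the binodal annulus. -/
noncomputable def εm (μp μm wp wm : ℝ) : ℝ :=
  Real.sqrt (-2 * (wp - wm) * μp / ((μp - μm) * μm))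

/-- Candidate convex envelope of the anti-plane shear energy. -/
noncomputable def Gap (μp μm wp wm : ℝ) (F : EuclideanSpace ℝ (Fin 2)) : ℝ :=
  if ‖F‖ ≤ εp μp μm wp wm then μp / 2 * ‖F‖ ^ 2 + wp
  else if ‖F‖ ≤ εm μp μm wp wm then
    ‖F‖ * Real.sqrt (-2 * (wp - wm) * μp * μm / (μp - μm)) +
      (μp * wp - μm * wm) / (μp - μm)
  else μm / 2 * ‖F‖ ^ 2 + wm

open Set

/-!
`Gap` is radial, `Gap F = g ‖F‖`, where the profile `g` follows the two parabolas
`μ₊/2 r² + w₊` and `μ₋/2 r² + w₋` outside `[ε₊, ε₋]` and their common tangent line inside.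
Writing `g` as that line plus `μ₊/2 ((ε₊ - r)⁺)² + μ₋/2 ((r - ε₋)⁺)²` shows that `g` is convex;
it is minimal at `0`, hence nondecreasing on `[0, ∞)`, so `g ∘ ‖·‖` is convex. The tangent line
lies below both parabolas, and as `μ₊ ≥ μ₋` their difference is monotone in `r ≥ 0`, so the
points of tangency decide which parabola is the lower one outside the annulus.
-/

theorem ConvexOn.monotoneOn_Ici_of_isMinOn {f : ℝ → ℝ} {x₀ : ℝ} (hf : ConvexOn ℝ (Ici x₀) f)
    (hmin : IsMinOn f (Ici x₀) x₀) : MonotoneOn f (Ici x₀) := by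
  intro u hu v hv huv
  have hseg : u ∈ segment ℝ x₀ v := by
    rw [segment_eq_Icc (hu.trans huv)]
    exact ⟨hu, huv⟩
  exact (hf.le_on_segment self_mem_Ici hv hseg).trans (max_le (hmin hv) le_rfl)

theorem ConvexOn.comp_norm {E : Type*} [SeminormedAddCommGroup E] [NormedSpace ℝ E] {g : ℝ → ℝ}
    (hg : ConvexOn ℝ (Ici 0) g) (hg_mono : MonotoneOn g (Ici 0)) :
    ConvexOn ℝ univ fun x : E => g ‖x‖ := by
  refine ⟨convex_univ, fun x _ y _ a b ha hb hab => ?_⟩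
  calc g ‖a • x + b • y‖ ≤ g (a • ‖x‖ + b • ‖y‖) :=
        hg_mono (norm_nonneg _) (by simp only [mem_Ici, smul_eq_mul]; positivity)
          (convexOn_univ_norm.2 trivial trivial ha hb hab)
    _ ≤ a • g ‖x‖ + b • g ‖y‖ := hg.2 (norm_nonneg x) (norm_nonneg y) ha hb hab

theorem convexOn_univ_sq_max_zero {f : ℝ → ℝ} (hf : ConvexOn ℝ univ f) :
    ConvexOn ℝ univ fun r => max (f r) 0 ^ 2 :=
  (hf.sup (convexOn_const 0 convex_univ)).pow (fun _ _ => le_max_right _ _) 2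

/-- The line `r ↦ r * s + c` touches the parabola `r ↦ a / 2 * r ^ 2 + α` at `A` and the parabola
`r ↦ b / 2 * r ^ 2 + β` at `B`. -/
structure IsCommonTangent (a b α β A B s c : ℝ) : Prop where
  slope_left : s = a * A
  slope_right : s = b * B
  touch_left : A * s + c = a / 2 * A ^ 2 + α
  touch_right : B * s + c = b / 2 * B ^ 2 + β

noncomputable def commonTangentProfile (a b α β A B s c r : ℝ) : ℝ :=
  if r ≤ A then a / 2 * r ^ 2 + α else if r ≤ B then r * s + c else b / 2 * r ^ 2 + β

namespace IsCommonTangent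

variable {a b α β A B s c r : ℝ}

theorem line_le_left (h : IsCommonTangent a b α β A B s c) (ha : 0 ≤ a) (r : ℝ) :
    r * s + c ≤ a / 2 * r ^ 2 + α := by
  have hgap : a / 2 * r ^ 2 + α - (r * s + c) = a / 2 * (r - A) ^ 2 := by
    linear_combination -h.touch_left + (A - r) * h.slope_left
  nlinarith [mul_nonneg ha (sq_nonneg (r - A))]

theorem line_le_right (h : IsCommonTangent a b α β A B s c) (hb : 0 ≤ b) (r : ℝ) :
    r * s + c ≤ b / 2 * r ^ 2 + β := by
  have hgap : b / 2 * r ^ 2 + β - (r * s + c) = b / 2 * (r - B) ^ 2 := by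
    linear_combination -h.touch_right + (B - r) * h.slope_right
  nlinarith [mul_nonneg hb (sq_nonneg (r - B))]

theorem tangencyPoints_le (h : IsCommonTangent a b α β A B s c) (hb : 0 < b) (hba : b ≤ a)
    (hA : 0 ≤ A) : A ≤ B := by
  nlinarith [h.slope_left.symm.trans h.slope_right, mul_nonneg (sub_nonneg.2 hba) hA]

theorem parabola_left_le_right (h : IsCommonTangent a b α β A B s c) (hb : 0 ≤ b) (hba : b ≤ a)
    (hr : 0 ≤ r) (hrA : r ≤ A) : a / 2 * r ^ 2 + α ≤ b / 2 * r ^ 2 + β := by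
  have hBtA := h.touch_left ▸ h.line_le_right hb A
  nlinarith [mul_le_mul_of_nonneg_left (pow_le_pow_left₀ hr hrA 2) (sub_nonneg.2 hba)]

theorem parabola_right_le_left (h : IsCommonTangent a b α β A B s c) (ha : 0 ≤ a) (hba : b ≤ a)
    (hB : 0 ≤ B) (hBr : B ≤ r) : b / 2 * r ^ 2 + β ≤ a / 2 * r ^ 2 + α := by
  have hAtB := h.touch_right ▸ h.line_le_left ha B
  nlinarith [mul_le_mul_of_nonneg_left (pow_le_pow_left₀ hB hBr 2) (sub_nonneg.2 hba)]

theorem profile_eq_line_add (h : IsCommonTangent a b α β A B s c) (hAB : A ≤ B) (r : ℝ) :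
    commonTangentProfile a b α β A B s c r =
      r * s + c + a / 2 * max (A - r) 0 ^ 2 + b / 2 * max (r - B) 0 ^ 2 := by
  unfold commonTangentProfile
  split_ifs with hrA hrB
  · rw [max_eq_left (by linarith), max_eq_right (by linarith)]
    linear_combination -h.touch_left + (A - r) * h.slope_left
  · rw [max_eq_right (by linarith), max_eq_right (by linarith)]
    ring
  · rw [max_eq_right (by linarith), max_eq_left (by linarith)]
    linear_combination -h.touch_right + (B - r) * h.slope_right

theorem convexOn_profile (h : IsCommonTangent a b α β A B s c) (ha : 0 ≤ a) (hb : 0 ≤ b)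
    (hAB : A ≤ B) : ConvexOn ℝ univ (commonTangentProfile a b α β A B s c) := by
  have hline : ConvexOn ℝ univ fun r : ℝ => r * s + c :=
    ((LinearMap.mulRight ℝ s).convexOn convex_univ).add_const c
  have hleft : ConvexOn ℝ univ fun r : ℝ => a / 2 * max (A - r) 0 ^ 2 :=
    (convexOn_univ_sq_max_zero ((convexOn_const A convex_univ).sub
      (concaveOn_id convex_univ))).smul (by positivity)
  have hright : ConvexOn ℝ univ fun r : ℝ => b / 2 * max (r - B) 0 ^ 2 :=
    (convexOn_univ_sq_max_zero ((convexOn_id convex_univ).sub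
      (concaveOn_const B convex_univ))).smul (by positivity)
  rw [funext (h.profile_eq_line_add hAB)]
  exact (hline.add hleft).add hright

theorem isMinOn_profile (h : IsCommonTangent a b α β A B s c) (hb : 0 < b) (hba : b ≤ a)
    (hA : 0 ≤ A) : IsMinOn (commonTangentProfile a b α β A B s c) univ 0 := by
  refine isMinOn_univ_iff.2 fun r => ?_
  have hAB := h.tangencyPoints_le hb hba hA
  have hline : r * s + c - α = a * A * (r - A) + a / 2 * A ^ 2 := by
    linear_combination h.touch_left + (r - A) * h.slope_left
  -- as `max (A - r) 0 ≥ A - r`, the excess over `α` is at least `a / 2 * (A - max (A - r) 0) ^ 2`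
  have hm : A - r ≤ max (A - r) 0 := le_max_left _ _
  rw [commonTangentProfile, if_pos hA, h.profile_eq_line_add hAB]
  nlinarith [mul_le_mul_of_nonneg_left hm (mul_nonneg (hb.le.trans hba) hA),
    mul_nonneg (hb.le.trans hba) (sq_nonneg (A - max (A - r) 0)),
    mul_nonneg hb.le (sq_nonneg (max (r - B) 0))]

theorem monotoneOn_profile (h : IsCommonTangent a b α β A B s c) (hb : 0 < b) (hba : b ≤ a)
    (hA : 0 ≤ A) : MonotoneOn (commonTangentProfile a b α β A B s c) (Ici 0) :=
  ConvexOn.monotoneOn_Ici_of_isMinOn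
    ((h.convexOn_profile (hb.le.trans hba) hb.le (h.tangencyPoints_le hb hba hA)).subset
      (subset_univ _) (convex_Ici 0))
    ((h.isMinOn_profile hb hba hA).on_subset (subset_univ _))

theorem profile_eq_min (h : IsCommonTangent a b α β A B s c) (hb : 0 < b) (hba : b ≤ a)
    (hA : 0 ≤ A) (hr : 0 ≤ r) (hr' : r ≤ A ∨ B ≤ r) :
    commonTangentProfile a b α β A B s c r = min (a / 2 * r ^ 2 + α) (b / 2 * r ^ 2 + β) := by
  have hAB := h.tangencyPoints_le hb hba hA
  rcases hr' with hrA | hBr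
  · rw [commonTangentProfile, if_pos hrA]
    exact (min_eq_left (h.parabola_left_le_right hb.le hba hr hrA)).symm
  · rw [min_eq_right (h.parabola_right_le_left (hb.le.trans hba) hba (hA.trans hAB) hBr),
      h.profile_eq_line_add hAB, max_eq_right (by linarith), max_eq_left (by linarith)]
    linear_combination h.touch_right + (r - B) * h.slope_right

theorem profile_le_min (h : IsCommonTangent a b α β A B s c) (hb : 0 < b) (hba : b ≤ a)
    (hA : 0 ≤ A) (hr : 0 ≤ r) :
    commonTangentProfile a b α β A B s c r ≤ min (a / 2 * r ^ 2 + α) (b / 2 * r ^ 2 + β) := by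
  by_cases hr' : r ≤ A ∨ B ≤ r
  · exact (h.profile_eq_min hb hba hA hr hr').le
  · simp only [not_or, not_le] at hr'
    rw [commonTangentProfile, if_neg hr'.1.not_ge, if_pos hr'.2.le]
    exact le_min (h.line_le_left (hb.le.trans hba) r) (h.line_le_right hb.le r)

end IsCommonTangent

theorem isCommonTangent_binodal {μp μm wp wm : ℝ} (hμm : 0 < μm) (hμ : μm < μp) (hw : wp < wm) :
    IsCommonTangent μp μm wp wm (εp μp μm wp wm) (εm μp μm wp wm)
      √(-2 * (wp - wm) * μp * μm / (μp - μm)) ((μp * wp - μm * wm) / (μp - μm)) := by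
  have hμp : 0 < μp := hμm.trans hμ
  have hΔμ : 0 < μp - μm := sub_pos.2 hμ
  have hΔw : 0 < -2 * (wp - wm) := by linarith
  have hεp : εp μp μm wp wm ^ 2 = -2 * (wp - wm) * μm / ((μp - μm) * μp) :=
    Real.sq_sqrt (div_nonneg (mul_nonneg hΔw.le hμm.le) (by positivity))
  have hεm : εm μp μm wp wm ^ 2 = -2 * (wp - wm) * μp / ((μp - μm) * μm) :=
    Real.sq_sqrt (div_nonneg (mul_nonneg hΔw.le hμp.le) (by positivity))
  have hεp0 : 0 ≤ εp μp μm wp wm := Real.sqrt_nonneg _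
  have hεm0 : 0 ≤ εm μp μm wp wm := Real.sqrt_nonneg _
  have hs : 0 ≤ -2 * (wp - wm) * μp * μm / (μp - μm) := by positivity
  have slope_left : √(-2 * (wp - wm) * μp * μm / (μp - μm)) = μp * εp μp μm wp wm := by
    rw [Real.sqrt_eq_iff_eq_sq hs (mul_nonneg hμp.le hεp0), mul_pow, hεp]
    field_simp
  have slope_right : √(-2 * (wp - wm) * μp * μm / (μp - μm)) = μm * εm μp μm wp wm := by
    rw [Real.sqrt_eq_iff_eq_sq hs (mul_nonneg hμm.le hεm0), mul_pow, hεm]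
    field_simp
  refine ⟨slope_left, slope_right, ?_, ?_⟩
  · rw [slope_left, mul_left_comm, ← sq, hεp]
    field_simp
    ring
  · rw [slope_right, mul_left_comm, ← sq, hεm]
    field_simp
    ring

theorem stmt9 (μp μm wp wm : ℝ) (hμm : 0 < μm) (hμ : μm < μp) (hw : wp < wm) :
    ConvexOn ℝ Set.univ (Gap μp μm wp wm) ∧
    (∀ F, Gap μp μm wp wm F ≤ Wap μp μm wp wm F) ∧
    (∀ F : EuclideanSpace ℝ (Fin 2),
      ‖F‖ ≤ εp μp μm wp wm ∨ εm μp μm wp wm ≤ ‖F‖ →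
        Gap μp μm wp wm F = Wap μp μm wp wm F) := by
  have h := isCommonTangent_binodal hμm hμ hw
  have hεp : 0 ≤ εp μp μm wp wm := Real.sqrt_nonneg _
  refine ⟨?_, fun F => ?_, fun F hF => ?_⟩
  · exact ConvexOn.comp_norm
      ((h.convexOn_profile (hμm.trans hμ).le hμm.le (h.tangencyPoints_le hμm hμ.le hεp)).subset
        (subset_univ _) (convex_Ici 0))
      (h.monotoneOn_profile hμm hμ.le hεp)
  · exact h.profile_le_min hμm hμ.le hεp (norm_nonneg F)
  · exact h.profile_eq_min hμm hμ.le hεp (norm_nonneg F) hF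
end

section
/- In the anti-plane shear setting (W(F) = min(μ₊|F|²/2 + w₊, μ₋|F|²/2 + w₋) with μ₊ > μ₋ > 0, w₊ < w₋), for F₀ with ε₊ ≤ |F₀| ≤ ε₋, setting F± = (ε±/|F₀|)F₀ and θ = (|F₀| − ε₋)/(ε₊ − ε₋), we have θ ∈ [0,1], F₀ = θF₊ + (1−θ)F₋, and θW(F₊) + (1−θ)W(F₋) = G(F₀), where G is the convex envelope formula of the previous statement. -/
/-!
The line `t ↦ s t + c` appearing in `Gap` on the annulus is the common tangent of the two wells
`t ↦ μ₊ t² / 2 + w₊` and `t ↦ μ₋ t² / 2 + w₋`: its slope is `s = μ₊ ε₊ = μ₋ ε₋`, so it touches the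
first well at `ε₊` and the second at `ε₋`. Since `F₊` and `F₋` lie on the circles of radii `ε₊`
and `ε₋`, where `W` is given by the first and the second well respectively, the average
`θ W(F₊) + (1 - θ) W(F₋)` is the value of the tangent at `θ ε₊ + (1 - θ) ε₋ = |F₀|`.
-/

theorem div_sub_mem_Icc_of_mem_Icc {𝕜 : Type*} [Field 𝕜] [LinearOrder 𝕜] [IsStrictOrderedRing 𝕜]
    {a b r : 𝕜} (hab : a < b) (har : a ≤ r) (hrb : r ≤ b) :
    (r - b) / (a - b) ∈ Set.Icc (0 : 𝕜) 1 := by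
  constructor
  · exact div_nonneg_of_nonpos (by linarith) (by linarith)
  · rw [div_le_one_of_neg (by linarith)]
    linarith

theorem div_sub_mul_add_one_sub_div_sub_mul {𝕜 : Type*} [Field 𝕜] {a b r : 𝕜} (hab : a ≠ b) :
    (r - b) / (a - b) * a + (1 - (r - b) / (a - b)) * b = r := by
  field_simp [sub_ne_zero.mpr hab]
  ring

theorem eq_smul_add_smul_of_mul_add_mul_eq {𝕜 E : Type*} [Field 𝕜] [AddCommGroup E] [Module 𝕜 E]
    {θ a b r : 𝕜} (hr : r ≠ 0) (h : θ * a + (1 - θ) * b = r) (x : E) :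
    x = θ • ((a / r) • x) + (1 - θ) • ((b / r) • x) := by
  rw [smul_smul, smul_smul, ← add_smul, mul_div_assoc', mul_div_assoc', ← add_div, h,
    div_self hr, one_smul]

theorem norm_div_norm_smul_self {E : Type*} [NormedAddCommGroup E] [NormedSpace ℝ E]
    {a : ℝ} (ha : 0 ≤ a) {x : E} (hx : x ≠ 0) : ‖(a / ‖x‖) • x‖ = a := by
  rw [norm_smul, Real.norm_of_nonneg (by positivity), div_mul_cancel₀ a (norm_ne_zero_iff.mpr hx)]

section AntiPlaneShear

variable {μp μm wp wm : ℝ}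

noncomputable def tangentSlope (μp μm wp wm : ℝ) : ℝ :=
  Real.sqrt (-2 * (wp - wm) * μp * μm / (μp - μm))

noncomputable def tangentIntercept (μp μm wp wm : ℝ) : ℝ :=
  (μp * wp - μm * wm) / (μp - μm)

theorem εp_sq (hμm : 0 < μm) (hμ : μm < μp) (hw : wp < wm) :
    εp μp μm wp wm ^ 2 = 2 * (wm - wp) * μm / ((μp - μm) * μp) := by
  rw [εp, Real.sq_sqrt (div_nonneg (by nlinarith) (by nlinarith))]
  ring

theorem εm_sq (hμm : 0 < μm) (hμ : μm < μp) (hw : wp < wm) :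
    εm μp μm wp wm ^ 2 = 2 * (wm - wp) * μp / ((μp - μm) * μm) := by
  rw [εm, Real.sq_sqrt (div_nonneg (by nlinarith) (by nlinarith))]
  ring

theorem εp_pos (hμm : 0 < μm) (hμ : μm < μp) (hw : wp < wm) : 0 < εp μp μm wp wm :=
  Real.sqrt_pos.mpr (div_pos (by nlinarith) (by nlinarith))

theorem εp_lt_εm (hμm : 0 < μm) (hμ : μm < μp) (hw : wp < wm) :
    εp μp μm wp wm < εm μp μm wp wm := by
  refine Real.sqrt_lt_sqrt (div_nonneg (by nlinarith) (by nlinarith)) ?_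
  rw [div_lt_div_iff₀ (by nlinarith) (by nlinarith)]
  nlinarith [mul_pos (mul_pos (sub_pos.mpr hw) (sub_pos.mpr hμ)) (sub_pos.mpr hμ)]

theorem mul_εp_eq_tangentSlope (hμm : 0 < μm) (hμ : μm < μp) :
    μp * εp μp μm wp wm = tangentSlope μp μm wp wm := by
  have hμp : 0 < μp := hμm.trans hμ
  rw [tangentSlope, εp, show -2 * (wp - wm) * μp * μm / (μp - μm)
      = μp ^ 2 * (-2 * (wp - wm) * μm / ((μp - μm) * μp)) by field_simp,
    Real.sqrt_mul (sq_nonneg _), Real.sqrt_sq hμp.le]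

theorem mul_εm_eq_tangentSlope (hμm : 0 < μm) :
    μm * εm μp μm wp wm = tangentSlope μp μm wp wm := by
  rw [tangentSlope, εm, show -2 * (wp - wm) * μp * μm / (μp - μm)
      = μm ^ 2 * (-2 * (wp - wm) * μp / ((μp - μm) * μm)) by field_simp,
    Real.sqrt_mul (sq_nonneg _), Real.sqrt_sq hμm.le]

theorem well_εp_eq_tangent (hμm : 0 < μm) (hμ : μm < μp) (hw : wp < wm) :
    μp / 2 * εp μp μm wp wm ^ 2 + wp =
      tangentSlope μp μm wp wm * εp μp μm wp wm + tangentIntercept μp μm wp wm := by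
  have hμp : 0 < μp := hμm.trans hμ
  rw [← mul_εp_eq_tangentSlope hμm hμ, mul_assoc, ← sq, εp_sq hμm hμ hw, tangentIntercept]
  field_simp [(sub_pos.mpr hμ).ne']
  ring

theorem well_εm_eq_tangent (hμm : 0 < μm) (hμ : μm < μp) (hw : wp < wm) :
    μm / 2 * εm μp μm wp wm ^ 2 + wm =
      tangentSlope μp μm wp wm * εm μp μm wp wm + tangentIntercept μp μm wp wm := by
  rw [← mul_εm_eq_tangentSlope hμm, mul_assoc, ← sq, εm_sq hμm hμ hw, tangentIntercept]
  field_simp [(sub_pos.mpr hμ).ne']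
  ring

theorem Wap_eq_of_norm_eq_εp (hμm : 0 < μm) (hμ : μm < μp) (hw : wp < wm)
    {F : EuclideanSpace ℝ (Fin 2)} (hF : ‖F‖ = εp μp μm wp wm) :
    Wap μp μm wp wm F = μp / 2 * εp μp μm wp wm ^ 2 + wp := by
  have hμp : 0 < μp := hμm.trans hμ
  rw [Wap, hF, min_eq_left]
  suffices (μp - μm) * εp μp μm wp wm ^ 2 ≤ 2 * (wm - wp) by linarith
  rw [εp_sq hμm hμ hw, mul_div_assoc', div_le_iff₀ (mul_pos (sub_pos.mpr hμ) hμp)]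
  nlinarith [mul_pos (mul_pos (sub_pos.mpr hw) (sub_pos.mpr hμ)) (sub_pos.mpr hμ)]

theorem Wap_eq_of_norm_eq_εm (hμm : 0 < μm) (hμ : μm < μp) (hw : wp < wm)
    {F : EuclideanSpace ℝ (Fin 2)} (hF : ‖F‖ = εm μp μm wp wm) :
    Wap μp μm wp wm F = μm / 2 * εm μp μm wp wm ^ 2 + wm := by
  rw [Wap, hF, min_eq_right]
  suffices 2 * (wm - wp) ≤ (μp - μm) * εm μp μm wp wm ^ 2 by linarith
  rw [εm_sq hμm hμ hw, mul_div_assoc', le_div_iff₀ (mul_pos (sub_pos.mpr hμ) hμm)]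
  nlinarith [mul_pos (mul_pos (sub_pos.mpr hw) (sub_pos.mpr hμ)) (sub_pos.mpr hμ)]

theorem Gap_eq_of_εp_le_of_le_εm (hμm : 0 < μm) (hμ : μm < μp) (hw : wp < wm)
    {F : EuclideanSpace ℝ (Fin 2)} (h₁ : εp μp μm wp wm ≤ ‖F‖) (h₂ : ‖F‖ ≤ εm μp μm wp wm) :
    Gap μp μm wp wm F = tangentSlope μp μm wp wm * ‖F‖ + tangentIntercept μp μm wp wm := by
  rw [Gap]
  split_ifs with hp
  · rw [le_antisymm hp h₁, well_εp_eq_tangent hμm hμ hw]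
  · rw [tangentSlope, tangentIntercept, mul_comm]

end AntiPlaneShear

theorem stmt10 (μp μm wp wm : ℝ) (hμm : 0 < μm) (hμ : μm < μp) (hw : wp < wm)
    (F₀ : EuclideanSpace ℝ (Fin 2))
    (h₁ : εp μp μm wp wm ≤ ‖F₀‖) (h₂ : ‖F₀‖ ≤ εm μp μm wp wm) :
    (‖F₀‖ - εm μp μm wp wm) / (εp μp μm wp wm - εm μp μm wp wm) ∈ Set.Icc (0:ℝ) 1 ∧
    F₀ = ((‖F₀‖ - εm μp μm wp wm) / (εp μp μm wp wm - εm μp μm wp wm)) •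
           ((εp μp μm wp wm / ‖F₀‖) • F₀) +
         (1 - (‖F₀‖ - εm μp μm wp wm) / (εp μp μm wp wm - εm μp μm wp wm)) •
           ((εm μp μm wp wm / ‖F₀‖) • F₀) ∧
    ((‖F₀‖ - εm μp μm wp wm) / (εp μp μm wp wm - εm μp μm wp wm)) *
        Wap μp μm wp wm ((εp μp μm wp wm / ‖F₀‖) • F₀) +
      (1 - (‖F₀‖ - εm μp μm wp wm) / (εp μp μm wp wm - εm μp μm wp wm)) *
        Wap μp μm wp wm ((εm μp μm wp wm / ‖F₀‖) • F₀) =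
      Gap μp μm wp wm F₀ := by
  have hεp := εp_pos hμm hμ hw
  have hεpm := εp_lt_εm hμm hμ hw
  have hF₀ : F₀ ≠ 0 := norm_pos_iff.mp (hεp.trans_le h₁)
  set θ := (‖F₀‖ - εm μp μm wp wm) / (εp μp μm wp wm - εm μp μm wp wm)
  have hθ : θ * εp μp μm wp wm + (1 - θ) * εm μp μm wp wm = ‖F₀‖ :=
    div_sub_mul_add_one_sub_div_sub_mul hεpm.ne
  refine ⟨div_sub_mem_Icc_of_mem_Icc hεpm h₁ h₂,
    eq_smul_add_smul_of_mul_add_mul_eq (norm_ne_zero_iff.mpr hF₀) hθ F₀, ?_⟩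
  rw [Wap_eq_of_norm_eq_εp hμm hμ hw (norm_div_norm_smul_self hεp.le hF₀),
    Wap_eq_of_norm_eq_εm hμm hμ hw (norm_div_norm_smul_self (hεp.trans hεpm).le hF₀),
    well_εp_eq_tangent hμm hμ hw, well_εm_eq_tangent hμm hμ hw,
    Gap_eq_of_εp_le_of_le_εm hμm hμ hw h₁ h₂]
  linear_combination tangentSlope μp μm wp wm * hθ
end

section
/- Let a ∈ ℝ^m, n, ν ∈ ℝ^d with |n| = |ν| = 1 and n·ν = 0. For h ∈ (0,1) define the region R₊ = {z ∈ ℝ^d : |z| < 1 − √h, z·ν > √h, 0 < z·n < h}. Then the d-dimensional Lebesgue measure of R₊ satisfies |R₊| = h·ω_{d−1}/2 + O(h^{3/2}) as h → 0, where ω_{d−1} is the volume of the unit ball in ℝ^{d−1}; precisely, |vol(R₊) − h·ω_{d−1}/2| ≤ C·h^{3/2} for some constant C depending only on d. -/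
/-!
Write `z = x • n + y` with `y ⊥ n`: volume on `E` is the product of `dx` and volume on `nᗮ`, a
space of dimension `d - 1`. With `s = √h` and `C(r, c)` the part of the `r`-ball of `nᗮ` where
`⟪y, ν⟫ > c`, we have `(0, h) × C(1 - 2s, s) ⊆ R₊ ⊆ (0, h) × C(1, 0)` (using `h ≤ s`).
`C(1, 0)` is a half ball, of volume `ω_{d-1} / 2`, while `C(1 - 2s, s)` contains the half ball of
radius `1 - 3s` translated by `s • ν`; Bernoulli's inequality `(1 - 3s)^{d-1} ≥ 1 - 3(d-1)s`
then bounds the defect by `3 (d-1) ω_{d-1} h s / 2`.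
-/

open MeasureTheory RealInnerProductSpace Metric Module Real

noncomputable def unitBallVolume (k : ℝ) : ℝ := π ^ (k / 2) / Gamma (k / 2 + 1)

theorem unitBallVolume_nonneg {k : ℝ} (hk : 0 ≤ k) : 0 ≤ unitBallVolume k :=
  div_nonneg (rpow_nonneg pi_pos.le _) (Gamma_pos_of_pos (by positivity)).le

section HalfBall

variable {F : Type*} [NormedAddCommGroup F] [InnerProductSpace ℝ F]

def ballCap (u : F) (r c : ℝ) : Set F := {y | ‖y‖ < r ∧ c < ⟪y, u⟫}

theorem isOpen_ballCap {u : F} {r c : ℝ} : IsOpen (ballCap u r c) :=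
  (isOpen_lt continuous_norm continuous_const).inter
    (isOpen_lt continuous_const (continuous_id.inner continuous_const :
      Continuous fun y : F => ⟪y, u⟫))

variable [FiniteDimensional ℝ F] [MeasurableSpace F] [BorelSpace F]

theorem toReal_volume_ball [Nontrivial F] {r : ℝ} (hr : 0 ≤ r) :
    (volume (ball (0 : F) r)).toReal = r ^ finrank ℝ F * unitBallVolume (finrank ℝ F) := by
  rw [InnerProductSpace.volume_ball, ENNReal.toReal_mul, ENNReal.toReal_pow,
    ENNReal.toReal_ofReal hr, ENNReal.toReal_ofReal (by positivity), unitBallVolume,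
    sqrt_eq_rpow, ← rpow_natCast (π ^ _), ← rpow_mul pi_pos.le, one_div_mul_eq_div]

theorem volume_ballCap_zero {u : F} (hu : u ≠ 0) (r : ℝ) :
    volume (ballCap u r 0) = volume (ball (0 : F) r) / 2 := by
  set P := ballCap u r 0
  have hP : MeasurableSet P := isOpen_ballCap.measurableSet
  have hyperplane_null : volume ((ℝ ∙ u)ᗮ : Set F) = 0 := by
    refine Measure.addHaar_submodule _ _ fun h => hu ?_
    have : u ∈ (ℝ ∙ u)ᗮ := h ▸ Submodule.mem_top
    simpa using Submodule.mem_orthogonal_singleton_iff_inner_right.mp this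
  have hsplit : ball (0 : F) r \ (ℝ ∙ u)ᗮ = P ∪ -P := by
    ext y
    simp [P, ballCap, Submodule.mem_orthogonal_singleton_iff_inner_left, inner_neg_left,
      ← and_or_left, lt_or_lt_iff_ne, eq_comm]
  have hdisj : Disjoint P (-P) := by
    rw [Set.disjoint_left]
    intro y hy hy'
    simp only [Set.mem_neg, P, ballCap, Set.mem_ofPred_eq, inner_neg_left] at hy hy'
    linarith [hy.2, hy'.2]
  rw [ENNReal.eq_div_iff two_ne_zero ENNReal.ofNat_ne_top,
    ← measure_sdiff_null (s := ball 0 r) hyperplane_null,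
    hsplit, measure_union hdisj hP.neg, Measure.measure_neg, two_mul]

theorem volume_ball_sub_div_two_le_volume_ballCap {u : F} (hu : ‖u‖ = 1) {c : ℝ} (hc : 0 ≤ c)
    (r : ℝ) : volume (ball (0 : F) (r - c)) / 2 ≤ volume (ballCap u r c) := by
  rw [← volume_ballCap_zero (norm_ne_zero_iff.mp (hu ▸ one_ne_zero)),
    ← measure_preimage_add_right volume (c • u) (ballCap u r c)]
  refine measure_mono fun y ⟨hy, hyu⟩ => ⟨?_, ?_⟩
  · calc ‖y + c • u‖ ≤ ‖y‖ + c := by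
          simpa [norm_smul, hu, abs_of_nonneg hc] using norm_add_le y (c • u)
      _ < r := by linarith
  · simp [inner_add_left, inner_smul_left, hu, hyu]

end HalfBall

section Slab

variable {E : Type*} [NormedAddCommGroup E] [InnerProductSpace ℝ E]

noncomputable def normalCoords (n z : E) : ℝ × (ℝ ∙ n)ᗮ :=
  (⟪z, n⟫, (ℝ ∙ n)ᗮ.orthogonalProjectionOnto z)

theorem normalCoords_fst_smul_add_snd {n : E} (hn : ‖n‖ = 1) (z : E) :
    (normalCoords n z).1 • n + ((normalCoords n z).2 : E) = z := by
  have := (ℝ ∙ n).starProjection_add_starProjection_orthogonal z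
  rw [Submodule.starProjection_singleton, hn] at this
  simpa [normalCoords, real_inner_comm] using this

theorem norm_normalCoords_snd_le (n z : E) : ‖(normalCoords n z).2‖ ≤ ‖z‖ :=
  Submodule.norm_orthogonalProjectionOnto_apply_le _ z

theorem inner_normalCoords_snd {n : E} (hn : ‖n‖ = 1) (z : E) (v : (ℝ ∙ n)ᗮ) :
    ⟪(normalCoords n z).2, v⟫ = ⟪z, (v : E)⟫ := by
  conv_rhs => rw [← normalCoords_fst_smul_add_snd hn z]
  rw [inner_add_left, inner_smul_left,
    Submodule.mem_orthogonal_singleton_iff_inner_right.mp v.2]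
  simp

/-- `R₊` in the paper. -/
def halfSlab (n ν : E) (h : ℝ) : Set E :=
  {z | ‖z‖ < 1 - √h ∧ √h < ⟪z, ν⟫ ∧ 0 < ⟪z, n⟫ ∧ ⟪z, n⟫ < h}

theorem halfSlab_subset {n ν : E} (hn : ‖n‖ = 1) (hν : ν ∈ (ℝ ∙ n)ᗮ) (h : ℝ) :
    halfSlab n ν h ⊆ normalCoords n ⁻¹' (Set.Ioo 0 h ×ˢ ballCap ⟨ν, hν⟩ 1 0) := by
  rintro z ⟨hz, hzν, hzn₀, hzn₁⟩
  refine ⟨⟨hzn₀, hzn₁⟩, ?_, ?_⟩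
  · linarith [norm_normalCoords_snd_le n z, sqrt_nonneg h]
  · rw [inner_normalCoords_snd hn]
    linarith [sqrt_nonneg h]

theorem subset_halfSlab {n ν : E} (hn : ‖n‖ = 1) (hν : ν ∈ (ℝ ∙ n)ᗮ) {h : ℝ} (h₀ : 0 ≤ h)
    (h₁ : h ≤ 1) :
    normalCoords n ⁻¹' (Set.Ioo 0 h ×ˢ ballCap ⟨ν, hν⟩ (1 - 2 * √h) √h) ⊆
      halfSlab n ν h := by
  rintro z ⟨⟨hzn₀, hzn₁⟩, hy, hyν⟩
  have hh : h ≤ √h := le_sqrt_of_sq_le (by nlinarith)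
  refine ⟨?_, ?_, hzn₀, hzn₁⟩
  · calc ‖z‖ ≤ |(normalCoords n z).1| + ‖(normalCoords n z).2‖ := by
          conv_lhs => rw [← normalCoords_fst_smul_add_snd hn z]
          simpa [norm_smul, hn] using
            norm_add_le ((normalCoords n z).1 • n) ((normalCoords n z).2 : E)
      _ < h + (1 - 2 * √h) := add_lt_add (by rwa [abs_of_pos hzn₀]) hy
      _ ≤ 1 - √h := by linarith
  · rwa [inner_normalCoords_snd hn] at hyν

theorem halfSlab_subset_ball (n ν : E) (h : ℝ) : halfSlab n ν h ⊆ ball 0 1 := fun z hz => by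
  simpa using hz.1.trans_le (by linarith [sqrt_nonneg h])

theorem nontrivial_orthogonal_span_singleton {n ν : E} (hν : ν ∈ (ℝ ∙ n)ᗮ) (hν₁ : ‖ν‖ = 1) :
    Nontrivial (ℝ ∙ n)ᗮ :=
  Submodule.nontrivial_iff_ne_bot.mpr <|
    (Submodule.ne_bot_iff _).mpr ⟨ν, hν, norm_ne_zero_iff.mp (hν₁ ▸ one_ne_zero)⟩

variable [FiniteDimensional ℝ E] [MeasurableSpace E] [BorelSpace E]

theorem measurePreserving_normalCoords {n : E} (hn : ‖n‖ = 1) :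
    MeasurePreserving (normalCoords n) := by
  have hK := (LinearIsometryEquiv.toSpanUnitSingleton n hn).symm.measurePreserving.prod
    (MeasurePreserving.id (volume : Measure (ℝ ∙ n)ᗮ))
  rw [← Measure.volume_eq_prod, ← Measure.volume_eq_prod] at hK
  convert hK.comp ((WithLp.volume_preserving_ofLp _ _).comp
    (ℝ ∙ n).orthogonalDecomposition.measurePreserving) using 1
  ext z
  · simp only [normalCoords, Function.comp_apply, Submodule.orthogonalDecomposition_apply,
      Prod.map_fst]
    rw [LinearIsometryEquiv.eq_symm_apply, Subtype.ext_iff,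
      LinearIsometryEquiv.toSpanUnitSingleton_apply, Submodule.coe_orthogonalProjectionOnto_apply,
      Submodule.starProjection_singleton, hn]
    simp [real_inner_comm]
  · simp [normalCoords]

theorem volume_normalCoords_preimage_prod {n : E} (hn : ‖n‖ = 1) {A : Set ℝ}
    {B : Set (ℝ ∙ n)ᗮ} (hA : MeasurableSet A) (hB : MeasurableSet B) :
    volume (normalCoords n ⁻¹' (A ×ˢ B)) = volume A * volume B := by
  rw [(measurePreserving_normalCoords hn).measure_preimage (hA.prod hB).nullMeasurableSet,
    Measure.volume_eq_prod, Measure.prod_prod]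

end Slab

section Bounds

variable {E : Type*} [NormedAddCommGroup E] [InnerProductSpace ℝ E] [FiniteDimensional ℝ E]
  [MeasurableSpace E] [BorelSpace E] {n ν : E}

theorem toReal_volume_halfSlab_le (hn : ‖n‖ = 1) (hν : ν ∈ (ℝ ∙ n)ᗮ) (hν₁ : ‖ν‖ = 1) {h : ℝ}
    (h₀ : 0 ≤ h) :
    (volume (halfSlab n ν h)).toReal ≤ h * unitBallVolume (finrank ℝ (ℝ ∙ n)ᗮ) / 2 := by
  have hν₀ : (⟨ν, hν⟩ : (ℝ ∙ n)ᗮ) ≠ 0 := norm_ne_zero_iff.mp (hν₁ ▸ one_ne_zero)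
  have := nontrivial_orthogonal_span_singleton hν hν₁
  have hvol : volume (halfSlab n ν h) ≤
      ENNReal.ofReal h * (volume (ball (0 : (ℝ ∙ n)ᗮ) 1) / 2) := by
    calc volume (halfSlab n ν h)
        ≤ volume (normalCoords n ⁻¹' (Set.Ioo 0 h ×ˢ ballCap ⟨ν, hν⟩ 1 0)) :=
          measure_mono (halfSlab_subset hn hν h)
      _ = _ := by
          rw [volume_normalCoords_preimage_prod hn measurableSet_Ioo isOpen_ballCap.measurableSet,
            Real.volume_Ioo, sub_zero, volume_ballCap_zero hν₀]
  have hfin : ENNReal.ofReal h * (volume (ball (0 : (ℝ ∙ n)ᗮ) 1) / 2) ≠ ⊤ :=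
    ENNReal.mul_ne_top ENNReal.ofReal_ne_top
      (ENNReal.div_ne_top measure_ball_lt_top.ne two_ne_zero)
  have := ENNReal.toReal_mono hfin hvol
  rwa [ENNReal.toReal_mul, ENNReal.toReal_div, ENNReal.toReal_ofReal h₀,
    toReal_volume_ball zero_le_one, one_pow, one_mul, ENNReal.toReal_ofNat,
    ← mul_div_assoc] at this

theorem le_toReal_volume_halfSlab (hn : ‖n‖ = 1) (hν : ν ∈ (ℝ ∙ n)ᗮ) (hν₁ : ‖ν‖ = 1) {h : ℝ}
    (h₀ : 0 ≤ h) (hs : 3 * √h ≤ 1) :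
    h * ((1 - 3 * √h) ^ finrank ℝ (ℝ ∙ n)ᗮ * unitBallVolume (finrank ℝ (ℝ ∙ n)ᗮ)) / 2 ≤
      (volume (halfSlab n ν h)).toReal := by
  have hν' : ‖(⟨ν, hν⟩ : (ℝ ∙ n)ᗮ)‖ = 1 := hν₁
  have := nontrivial_orthogonal_span_singleton hν hν₁
  have h₁ : h ≤ 1 := by nlinarith [sq_sqrt h₀, sqrt_nonneg h]
  have hvol : ENNReal.ofReal h * (volume (ball (0 : (ℝ ∙ n)ᗮ) (1 - 3 * √h)) / 2) ≤
      volume (halfSlab n ν h) := by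
    calc ENNReal.ofReal h * (volume (ball (0 : (ℝ ∙ n)ᗮ) (1 - 3 * √h)) / 2)
        ≤ volume (Set.Ioo 0 h) * volume (ballCap (⟨ν, hν⟩ : (ℝ ∙ n)ᗮ) (1 - 2 * √h) √h) := by
          rw [Real.volume_Ioo, sub_zero, show 1 - 3 * √h = 1 - 2 * √h - √h by ring]
          gcongr
          exact volume_ball_sub_div_two_le_volume_ballCap hν' (sqrt_nonneg h) _
      _ = volume (normalCoords n ⁻¹' (Set.Ioo 0 h ×ˢ ballCap ⟨ν, hν⟩ (1 - 2 * √h) √h)) :=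
          (volume_normalCoords_preimage_prod hn measurableSet_Ioo
            isOpen_ballCap.measurableSet).symm
      _ ≤ volume (halfSlab n ν h) := measure_mono (subset_halfSlab hn hν h₀ h₁)
  have := ENNReal.toReal_mono
    (measure_mono (halfSlab_subset_ball n ν h) |>.trans_lt measure_ball_lt_top).ne hvol
  rwa [ENNReal.toReal_mul, ENNReal.toReal_div, ENNReal.toReal_ofReal h₀,
    toReal_volume_ball (by linarith), ENNReal.toReal_ofNat, ← mul_div_assoc] at this

end Bounds

theorem rpow_three_halves_eq_mul_sqrt {h : ℝ} (h₀ : 0 ≤ h) : h ^ (3 / 2 : ℝ) = h * √h := by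
  rw [sqrt_eq_rpow, ← rpow_one_add' h₀ (by norm_num)]
  norm_num

theorem abs_toReal_volume_halfSlab_sub_le {E : Type*} [NormedAddCommGroup E]
    [InnerProductSpace ℝ E] [FiniteDimensional ℝ E] [MeasurableSpace E] [BorelSpace E]
    {n ν : E} (hn : ‖n‖ = 1) (hν : ‖ν‖ = 1) (hnν : ⟪n, ν⟫ = 0) {h : ℝ} (h₀ : 0 ≤ h) :
    |(volume (halfSlab n ν h)).toReal - h * unitBallVolume (finrank ℝ E - 1) / 2| ≤
      3 * (finrank ℝ E - 1) * unitBallVolume (finrank ℝ E - 1) / 2 * h ^ (3 / 2 : ℝ) := by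
  have hνn : ν ∈ (ℝ ∙ n)ᗮ := Submodule.mem_orthogonal_singleton_iff_inner_right.mpr hnν
  set k := finrank ℝ (ℝ ∙ n)ᗮ
  have hk : (k : ℝ) = finrank ℝ E - 1 := by
    have := (ℝ ∙ n).finrank_add_finrank_orthogonal
    rw [finrank_span_singleton (norm_ne_zero_iff.mp (hn ▸ one_ne_zero))] at this
    rw [← this]
    push_cast
    ring
  have := nontrivial_orthogonal_span_singleton hνn hν
  have hk₁ : (1 : ℝ) ≤ k := by exact_mod_cast finrank_pos
  rw [← hk, rpow_three_halves_eq_mul_sqrt h₀]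
  set t := (volume (halfSlab n ν h)).toReal
  set ω := unitBallVolume k
  have hω : 0 ≤ ω := unitBallVolume_nonneg (Nat.cast_nonneg k)
  have hupper : t ≤ h * ω / 2 := toReal_volume_halfSlab_le hn hνn hν h₀
  rw [abs_sub_comm, abs_of_nonneg (by linarith)]
  rcases le_or_gt (3 * √h) 1 with hs | hs
  · have hlower := le_toReal_volume_halfSlab hn hνn hν h₀ hs
    have bernoulli : 1 - 3 * k * √h ≤ (1 - 3 * √h) ^ k := by
      have := one_add_mul_le_pow (a := -(3 * √h)) (by linarith [sqrt_nonneg h]) k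
      rw [← sub_eq_add_neg] at this
      linear_combination this
    calc h * ω / 2 - t ≤ h * ω / 2 - h * ((1 - 3 * √h) ^ k * ω) / 2 := by linarith
      _ ≤ h * ω / 2 - h * ((1 - 3 * k * √h) * ω) / 2 := by gcongr
      _ = 3 * k * ω / 2 * (h * √h) := by ring
  · have ht : 0 ≤ t := ENNReal.toReal_nonneg
    have : h * ω ≤ 3 * k * ω * (h * √h) := by
      have : 1 ≤ 3 * k * √h := by nlinarith
      nlinarith [mul_nonneg h₀ hω]
    linarith

theorem stmt19 (d : ℕ) :
    ∃ C : ℝ, ∀ (n ν : EuclideanSpace ℝ (Fin d)),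
      ‖n‖ = 1 → ‖ν‖ = 1 → ⟪n, ν⟫ = 0 →
      ∀ h ∈ Set.Ioo (0:ℝ) 1,
        |(volume {z : EuclideanSpace ℝ (Fin d) |
            ‖z‖ < 1 - Real.sqrt h ∧ Real.sqrt h < ⟪z, ν⟫ ∧
              0 < ⟪z, n⟫ ∧ ⟪z, n⟫ < h}).toReal -
          h * (Real.pi ^ ((d - 1 : ℝ) / 2) /
            Real.Gamma ((d - 1 : ℝ) / 2 + 1)) / 2| ≤
        C * h ^ ((3:ℝ) / 2) := by
  refine ⟨3 * (d - 1) * unitBallVolume (d - 1) / 2, fun n ν hn hν hnν h hh => ?_⟩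
  have := abs_toReal_volume_halfSlab_sub_le hn hν hnν hh.1.le
  rwa [finrank_euclideanSpace_fin] at this
end
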